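/- Every divergenceless flow Q ∈ ℓ¹₊(E) on a countable oriented graph admits a cyclic decomposition as a countable nonnegative combination of indicators of self-avoiding finite directed cycles. -/

import Mathlib

/-- A self-avoiding finite directed cycle in the oriented graph with edge relation `E`:
a nonempty list of pairwise distinct vertices whose consecutive pairs (cyclically)
are edges of the graph. -/
def IsSACycle {V : Type*} (E : V → V → Prop) (l : List V) : Prop :=
  l ≠ [] ∧ l.Nodup ∧ ∀ p ∈ l.zip (l.rotate 1), E p.1 p.2

/-!
Work in `ℝ≥0∞`. By Zorn's lemma there is a maximal family of cycle weights whose superposition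
stays below `Q`; maximality means that every cycle has a saturated edge. The residual flow is
again divergence-free and summable. If it were positive on an edge `(y, z)`, then `y` would be
reachable from `z` along edges of positive residual, because a summable divergence-free flow
cannot enter a set of vertices that it cannot leave. A self-avoiding such path, closed by
`(y, z)`, is a cycle on which the residual is positive everywhere, contradicting saturation.
-/

open scoped ENNReal

namespace List

variable {α : Type*}

theorem zip_tail_append_singleton {l : List α} {b : α} (hb : l.getLast? = some b) (a : α) :
    l.zip (l.tail ++ [a]) = l.zip l.tail ++ [(b, a)] := by
  induction l with
  | nil => simp at hb
  | cons c t ih =>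
    cases t with
    | nil => simp_all
    | cons d t => simp_all

theorem zip_rotate_one_cons {a b : α} {t : List α} (hb : (a :: t).getLast? = some b) :
    (a :: t).zip ((a :: t).rotate 1) = (a :: t).zip t ++ [(b, a)] := by
  rw [rotate_cons_succ, rotate_zero]
  exact zip_tail_append_singleton hb a

theorem IsChain.rel_of_mem_zip_tail {r : α → α → Prop} {l : List α} (h : l.IsChain r)
    {p : α × α} (hp : p ∈ l.zip l.tail) : r p.1 p.2 := by
  induction h with
  | nil => simp at hp
  | singleton => simp at hp
  | cons_cons hr _ ih =>
    simp only [tail_cons, zip_cons_cons, mem_cons] at hp ih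
    rcases hp with rfl | hp
    · exact hr
    · exact ih hp

theorem exists_nodup_isChain_of_reflTransGen {r : α → α → Prop} {a b : α}
    (h : Relation.ReflTransGen r a b) :
    ∃ t, (a :: t).Nodup ∧ (a :: t).IsChain r ∧ (a :: t).getLast? = some b := by
  classical
  induction h using Relation.ReflTransGen.head_induction_on with
  | refl => exact ⟨[], nodup_singleton b, .singleton b, rfl⟩
  | @head a c hac _ ih =>
    obtain ⟨t, hnd, hch, hlast⟩ := ih
    by_cases ha : a ∈ c :: t
    · obtain ⟨s, u, hsu⟩ := append_of_mem ha
      rw [hsu] at hnd hch hlast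
      exact ⟨u, hnd.of_append_right, hch.right_of_append,
        by rwa [getLast?_append_of_ne_nil _ (cons_ne_nil a u)] at hlast⟩
    · exact ⟨c :: t, nodup_cons.2 ⟨ha, hnd⟩, hch.cons_cons hac, by simpa using hlast⟩

theorem exists_nodup_cycle_of_reflTransGen {r : α → α → Prop} {a b : α}
    (hab : Relation.ReflTransGen r a b) (hba : r b a) :
    ∃ l : List α, l.Nodup ∧ (b, a) ∈ l.zip (l.rotate 1) ∧
      ∀ p ∈ l.zip (l.rotate 1), r p.1 p.2 := by
  obtain ⟨t, hnd, hch, hlast⟩ := exists_nodup_isChain_of_reflTransGen hab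
  refine ⟨a :: t, hnd, ?_, ?_⟩ <;> rw [zip_rotate_one_cons hlast]
  · exact mem_append_right _ (mem_singleton_self _)
  · intro p hp
    rcases mem_append.1 hp with hp | hp
    · exact hch.rel_of_mem_zip_tail hp
    · rw [mem_singleton.1 hp]; exact hba

end List

theorem tsum_ite_mem_eq_of_nodup_map_fst {α β M : Type*} [DecidableEq α] [DecidableEq β]
    [AddCommMonoid M] [TopologicalSpace M] {P : List (α × β)} (hP : (P.map Prod.fst).Nodup)
    (a : α) (m : M) :
    ∑' b, (if (a, b) ∈ P then m else 0) = if a ∈ P.map Prod.fst then m else 0 := by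
  by_cases ha : a ∈ P.map Prod.fst
  · obtain ⟨p, hp, rfl⟩ := List.mem_map.1 ha
    have hmem : ∀ b, (p.1, b) ∈ P ↔ b = p.2 := fun b =>
      ⟨fun hb => congrArg Prod.snd (List.inj_on_of_nodup_map hP hb hp rfl),
        by rintro rfl; exact hp⟩
    simp only [hmem, ha, if_true]
    exact tsum_ite_eq p.2 (fun _ => m)
  · have hmem : ∀ b, (a, b) ∉ P := fun b hb => ha (List.mem_map.2 ⟨(a, b), hb, rfl⟩)
    simp [hmem, ha]

theorem ENNReal.tsum_sub_of_le {ι : Type*} {f g : ι → ℝ≥0∞} (hg : ∑' i, g i ≠ ∞)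
    (h : g ≤ f) :
    ∑' i, (f i - g i) = ∑' i, f i - ∑' i, g i := by
  refine ENNReal.eq_sub_of_add_eq hg ?_
  rw [← ENNReal.tsum_add]
  exact tsum_congr fun i => tsub_add_cancel_of_le (h i)

theorem ENNReal.hasSum_toReal_of_tsum_eq {ι : Type*} {f : ι → ℝ≥0∞} {a : ℝ≥0∞}
    (h : ∑' i, f i = a) (ha : a ≠ ∞) : HasSum (fun i => (f i).toReal) a.toReal := by
  have hfin : ∑' i, f i ≠ ∞ := h ▸ ha
  have := ENNReal.hasSum_toReal hfin
  rwa [← ENNReal.tsum_toReal_eq fun i => ne_top_of_le_ne_top hfin (ENNReal.le_tsum i), h]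
    at this

section Circulation

variable {V : Type*}

def IsCirculation (q : V → V → ℝ≥0∞) : Prop :=
  ∀ y, ∑' z, q y z = ∑' z, q z y

theorem isCirculation_cycle [DecidableEq V] {l : List V} (hl : l.Nodup) (δ : ℝ≥0∞) :
    IsCirculation fun y z => if (y, z) ∈ l.zip (l.rotate 1) then δ else 0 := by
  intro y
  have hlen : l.length = (l.rotate 1).length := (List.length_rotate l 1).symm
  have hfst : (l.zip (l.rotate 1)).map Prod.fst = l := List.map_fst_zip hlen.le
  have hsnd : ((l.zip (l.rotate 1)).map Prod.swap).map Prod.fst = l.rotate 1 := by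
    rw [List.map_map]
    exact List.map_snd_zip hlen.ge
  conv_rhs => simp only [← List.mem_map_swap _ y]
  rw [tsum_ite_mem_eq_of_nodup_map_fst (by rwa [hfst]), tsum_ite_mem_eq_of_nodup_map_fst
    (by rwa [hsnd, List.nodup_rotate]), hfst, hsnd]
  simp only [List.mem_rotate]

theorem IsCirculation.tsum {κ : Type*} {q : κ → V → V → ℝ≥0∞}
    (hq : ∀ k, IsCirculation (q k)) :
    IsCirculation fun y z => ∑' k, q k y z := fun y => by
  rw [ENNReal.tsum_comm, tsum_congr fun k => hq k y, ENNReal.tsum_comm]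

theorem tsum_row_le_tsum_prod (q : V → V → ℝ≥0∞) (y : V) :
    ∑' z, q y z ≤ ∑' p : V × V, q p.1 p.2 :=
  ENNReal.tsum_comp_le_tsum_of_injective (Prod.mk_right_injective y)
    (fun p : V × V => q p.1 p.2)

theorem tsum_col_le_tsum_prod (q : V → V → ℝ≥0∞) (y : V) :
    ∑' z, q z y ≤ ∑' p : V × V, q p.1 p.2 :=
  ENNReal.tsum_comp_le_tsum_of_injective (Prod.mk_left_injective y)
    (fun p : V × V => q p.1 p.2)

theorem IsCirculation.tsub {q r : V → V → ℝ≥0∞} (hq : IsCirculation q) (hr : IsCirculation r)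
    (hrq : r ≤ q) (hfin : ∑' p : V × V, q p.1 p.2 ≠ ∞) : IsCirculation (q - r) := fun y => by
  have hrow := ne_top_of_le_ne_top hfin (tsum_row_le_tsum_prod r y |>.trans
    (ENNReal.tsum_le_tsum fun p => hrq p.1 p.2))
  have hcol := ne_top_of_le_ne_top hfin (tsum_col_le_tsum_prod r y |>.trans
    (ENNReal.tsum_le_tsum fun p => hrq p.1 p.2))
  simp only [Pi.sub_apply]
  rw [ENNReal.tsum_sub_of_le hrow fun z => hrq y z,
    ENNReal.tsum_sub_of_le hcol fun z => hrq z y, hq y, hr y]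

theorem IsCirculation.eq_zero_of_mem_of_notMem {q : V → V → ℝ≥0∞} (hq : IsCirculation q)
    (hfin : ∑' p : V × V, q p.1 p.2 ≠ ∞) {A : Set V} (hA : ∀ a ∈ A, ∀ b, 0 < q a b → b ∈ A)
    {a b : V} (ha : a ∈ A) (hb : b ∉ A) : q b a = 0 := by
  have hout : ∑' a : A, ∑' b : ↥Aᶜ, q a b = 0 := by
    simp only [ENNReal.tsum_eq_zero]
    exact fun a b => nonpos_iff_eq_zero.1 (not_lt.1 fun h => b.2 (hA a a.2 b h))
  have hinside : ∑' a : A, ∑' b : A, q a b ≠ ∞ :=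
    ne_top_of_le_ne_top hfin <| calc
      ∑' a : A, ∑' b : A, q a b = ∑' p : A × A, q p.1 p.2 := ENNReal.tsum_prod.symm
      _ ≤ ∑' p : V × V, q p.1 p.2 :=
        ENNReal.tsum_comp_le_tsum_of_injective (Subtype.val_injective.prodMap
          Subtype.val_injective) (fun p : V × V => q p.1 p.2)
  -- The mass inside `A` is finite and cancels from the balance of `A`, so the inflow into `A`
  -- equals the outflow, which vanishes.
  have hbalance : ∑' a : A, ∑' b : A, q a b + ∑' a : A, ∑' b : ↥Aᶜ, q a b =
      ∑' a : A, ∑' b : A, q a b + ∑' a : A, ∑' b : ↥Aᶜ, q b a := by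
    rw [← ENNReal.tsum_add, ENNReal.tsum_comm (f := fun a b : A => q a b), ← ENNReal.tsum_add]
    refine tsum_congr fun a => ?_
    rw [ENNReal.summable.tsum_add_tsum_compl (f := fun b => q a b) ENNReal.summable,
      ENNReal.summable.tsum_add_tsum_compl (f := fun b => q b a) ENNReal.summable, hq a]
  rw [hout] at hbalance
  have hin := ((ENNReal.add_right_inj hinside).1 hbalance).symm
  exact ENNReal.tsum_eq_zero.1 (ENNReal.tsum_eq_zero.1 hin ⟨a, ha⟩) ⟨b, hb⟩

theorem IsCirculation.exists_cycle_of_pos [DecidableEq V] {q : V → V → ℝ≥0∞}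
    (hq : IsCirculation q) (hfin : ∑' p : V × V, q p.1 p.2 ≠ ∞) {y z : V} (hyz : 0 < q y z) :
    ∃ l : List V, l.Nodup ∧ (y, z) ∈ l.zip (l.rotate 1) ∧
      ∀ p ∈ l.zip (l.rotate 1), 0 < q p.1 p.2 := by
  have hzy : Relation.ReflTransGen (fun a b => 0 < q a b) z y := by
    by_contra hy
    exact hyz.ne' <| hq.eq_zero_of_mem_of_notMem hfin (A := {a | Relation.ReflTransGen _ z a})
      (fun _ ha _ hab => ha.tail hab) Relation.ReflTransGen.refl hy
  exact List.exists_nodup_cycle_of_reflTransGen hzy hyz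

theorem IsCirculation.ofReal {V : Type*} {Q : V → V → ℝ} (hnonneg : ∀ y z, 0 ≤ Q y z)
    (hsum : Summable (fun p : V × V => Q p.1 p.2)) (hdiv : ∀ y, ∑' z, Q y z = ∑' z, Q z y) :
    IsCirculation fun y z => ENNReal.ofReal (Q y z) := fun y => by
  have hrow : Summable fun z => Q y z :=
    hsum.comp_injective (i := (y, ·)) (Prod.mk_right_injective y)
  have hcol : Summable fun z => Q z y :=
    hsum.comp_injective (i := (·, y)) (Prod.mk_left_injective y)
  rw [← ENNReal.ofReal_tsum_of_nonneg (hnonneg y) hrow,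
    ← ENNReal.ofReal_tsum_of_nonneg (hnonneg · y) hcol, hdiv y]

end Circulation

section Packing

variable {ι α : Type*} [DecidableEq α] (S : ι → Finset α)

noncomputable def packingLoad (w : ι → ℝ≥0∞) (p : α) : ℝ≥0∞ :=
  ∑' i, if p ∈ S i then w i else 0

theorem le_packingLoad {w : ι → ℝ≥0∞} {i : ι} {p : α} (hp : p ∈ S i) :
    w i ≤ packingLoad S w p :=
  (if_pos hp).symm.le.trans (ENNReal.le_tsum (f := fun i => if p ∈ S i then w i else 0) i)

theorem packingLoad_add (w v : ι → ℝ≥0∞) (p : α) :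
    packingLoad S (w + v) p = packingLoad S w p + packingLoad S v p := by
  rw [packingLoad, packingLoad, packingLoad, ← ENNReal.tsum_add]
  exact tsum_congr fun i => by split_ifs <;> simp

theorem packingLoad_single [DecidableEq ι] (i : ι) (δ : ℝ≥0∞) (p : α) :
    packingLoad S (Pi.single i δ) p = if p ∈ S i then δ else 0 := by
  rw [packingLoad, tsum_eq_single i fun j hj => by simp [hj]]
  simp

theorem packingLoad_iSup {κ : Type*} {W : κ → ι → ℝ≥0∞} (hW : Directed (· ≤ ·) W) (p : α) :
    packingLoad S (⨆ k, W k) p = ⨆ k, packingLoad S (W k) p := by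
  have hite : ∀ i, (if p ∈ S i then (⨆ k, W k) i else 0) = ⨆ k, if p ∈ S i then W k i else 0 :=
    fun i => by split_ifs <;> simp
  simp only [packingLoad, hite, ENNReal.tsum_eq_iSup_sum]
  rw [iSup_comm]
  refine iSup_congr fun s => ENNReal.finsetSum_iSup fun k k' => ?_
  obtain ⟨k'', hk, hk'⟩ := hW k k'
  exact ⟨k'', fun i => by split_ifs <;> simp [hk i, hk' i]⟩

theorem exists_maximal_packing (Q : α → ℝ≥0∞) :
    ∃ w, Maximal (fun w => ∀ p, packingLoad S w p ≤ Q p) w := by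
  refine zorn_le₀ _ fun c hcs hc =>
    ⟨⨆ w : c, w.1, fun p => ?_, fun w hw => le_iSup_of_le ⟨w, hw⟩ le_rfl⟩
  rw [packingLoad_iSup S hc.directed]
  exact iSup_le fun w => hcs w.2 p

theorem exists_saturated_packing (hS : ∀ i, (S i).Nonempty) (Q : α → ℝ≥0∞) :
    ∃ w, (∀ p, packingLoad S w p ≤ Q p) ∧ ∀ i, ∃ p ∈ S i, packingLoad S w p = Q p := by
  classical
  obtain ⟨w, hw, hmax⟩ := exists_maximal_packing S Q
  refine ⟨w, hw, fun i => ?_⟩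
  -- Otherwise `w i` could be raised by the least slack `δ` along `S i`.
  by_contra! hunsat
  have hlt : ∀ p ∈ S i, packingLoad S w p < Q p := fun p hp => (hw p).lt_of_ne (hunsat p hp)
  set δ := (S i).inf fun p => Q p - packingLoad S w p
  have hδ : 0 < δ :=
    (Finset.lt_inf_iff ENNReal.zero_lt_top).2 fun p hp => tsub_pos_of_lt (hlt p hp)
  have hfeasible : ∀ p, packingLoad S (w + Pi.single i δ) p ≤ Q p := fun p => by
    rw [packingLoad_add, packingLoad_single]
    split_ifs with hp
    · calc packingLoad S w p + δ ≤ packingLoad S w p + (Q p - packingLoad S w p) :=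
            add_le_add le_rfl (Finset.inf_le (f := fun p => Q p - packingLoad S w p) hp)
        _ = Q p := add_tsub_cancel_of_le (hw p)
    · simpa using hw p
  have hwi : w i = ∞ := by
    by_contra hwi
    have := hmax hfeasible (le_add_of_nonneg_right zero_le) i
    simp only [Pi.add_apply, Pi.single_eq_same] at this
    exact this.not_gt (ENNReal.lt_add_right hwi hδ.ne')
  obtain ⟨p, hp⟩ := hS i
  exact (hlt p hp).ne_top (top_le_iff.1 (hwi ▸ le_packingLoad S hp))

end Packing

section Cycles

variable {V : Type*} [DecidableEq V] (E : V → V → Prop)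

def cycleEdges (c : {l : List V // IsSACycle E l}) : Finset (V × V) :=
  ((c : List V).zip ((c : List V).rotate 1)).toFinset

theorem cycleEdges_nonempty (c : {l : List V // IsSACycle E l}) :
    (cycleEdges E c).Nonempty := by
  simp [cycleEdges, List.toFinset_nonempty_iff, c.2.1]

theorem isCirculation_packingLoad_cycleEdges (w : {l : List V // IsSACycle E l} → ℝ≥0∞) :
    IsCirculation fun y z => packingLoad (cycleEdges E) w (y, z) := by
  refine IsCirculation.tsum fun c => ?_
  simpa only [cycleEdges, List.mem_toFinset] using isCirculation_cycle c.2.2.1 (w c)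

theorem packingLoad_cycleEdges_eq {q : V → V → ℝ≥0∞} (hq : IsCirculation q)
    (hfin : ∑' p : V × V, q p.1 p.2 ≠ ∞) (hE : ∀ y z, 0 < q y z → E y z)
    {w : {l : List V // IsSACycle E l} → ℝ≥0∞}
    (hle : ∀ p, packingLoad (cycleEdges E) w p ≤ q p.1 p.2)
    (hsat : ∀ c, ∃ p ∈ cycleEdges E c, packingLoad (cycleEdges E) w p = q p.1 p.2) (y z : V) :
    packingLoad (cycleEdges E) w (y, z) = q y z := by
  set r := q - fun y z => packingLoad (cycleEdges E) w (y, z)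
  have hr : IsCirculation r := hq.tsub (isCirculation_packingLoad_cycleEdges E w)
    (fun y z => hle (y, z)) hfin
  have hrfin : ∑' p : V × V, r p.1 p.2 ≠ ∞ :=
    ne_top_of_le_ne_top hfin (ENNReal.tsum_le_tsum fun p => tsub_le_self)
  refine (hle (y, z)).antisymm (tsub_eq_zero_iff_le.1 ?_)
  by_contra hyz
  obtain ⟨l, hnd, hmem, hpos⟩ := hr.exists_cycle_of_pos hrfin (pos_iff_ne_zero.2 hyz)
  have hl : IsSACycle E l :=
    ⟨by rintro rfl; simp at hmem, hnd, fun p hp => hE _ _ ((hpos p hp).trans_le tsub_le_self)⟩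
  obtain ⟨p, hp, hsat⟩ := hsat ⟨l, hl⟩
  have := hpos p (List.mem_toFinset.1 hp)
  simp [r, hsat] at this

theorem exists_packingLoad_cycleEdges_eq {q : V → V → ℝ≥0∞} (hq : IsCirculation q)
    (hfin : ∑' p : V × V, q p.1 p.2 ≠ ∞) (hE : ∀ y z, 0 < q y z → E y z) :
    ∃ w : {l : List V // IsSACycle E l} → ℝ≥0∞,
      ∀ y z, packingLoad (cycleEdges E) w (y, z) = q y z := by
  obtain ⟨w, hle, hsat⟩ :=
    exists_saturated_packing (cycleEdges E) (cycleEdges_nonempty E) fun p => q p.1 p.2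
  exact ⟨w, packingLoad_cycleEdges_eq E hq hfin hE hle hsat⟩

end Cycles

theorem stmt7_general {V : Type*} [DecidableEq V] (E : V → V → Prop)
    (Q : V → V → ℝ)
    (hnonneg : ∀ y z, 0 ≤ Q y z)
    (hzero : ∀ y z, ¬ E y z → Q y z = 0)
    (hsum : Summable (fun p : V × V => Q p.1 p.2))
    (hdiv : ∀ y, ∑' z, Q y z = ∑' z, Q z y) :
    ∃ w : {l : List V // IsSACycle E l} → ℝ,
      (∀ c, 0 ≤ w c) ∧
      ∀ y z, E y z →
        HasSum
          (fun c : {l : List V // IsSACycle E l} =>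
            if (y, z) ∈ (c : List V).zip ((c : List V).rotate 1) then w c else 0)
          (Q y z) := by
  have hfin : ∑' p : V × V, ENNReal.ofReal (Q p.1 p.2) ≠ ∞ := by
    rw [← ENNReal.ofReal_tsum_of_nonneg (f := fun p : V × V => Q p.1 p.2)
      (fun p => hnonneg p.1 p.2) hsum]
    exact ENNReal.ofReal_ne_top
  have hE : ∀ y z, 0 < ENNReal.ofReal (Q y z) → E y z := fun y z hyz => by
    by_contra hyz'
    simp [hzero y z hyz'] at hyz
  obtain ⟨w, hw⟩ := exists_packingLoad_cycleEdges_eq E (.ofReal hnonneg hsum hdiv) hfin hE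
  refine ⟨fun c => (w c).toReal, fun c => ENNReal.toReal_nonneg, fun y z _ => ?_⟩
  have := ENNReal.hasSum_toReal_of_tsum_eq (hw y z) ENNReal.ofReal_ne_top
  rw [ENNReal.toReal_ofReal (hnonneg y z)] at this
  convert this using 2 with c
  simp only [cycleEdges, List.mem_toFinset]
  split_ifs <;> rfl

theorem stmt7 {V : Type*} [Countable V] [DecidableEq V] (E : V → V → Prop)
    (hloop : ∀ y, ¬ E y y)
    (Q : V → V → ℝ)
    (hnonneg : ∀ y z, 0 ≤ Q y z)
    (hzero : ∀ y z, ¬ E y z → Q y z = 0)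
    (hsum : Summable (fun p : V × V => Q p.1 p.2))
    (hdiv : ∀ y, ∑' z, Q y z = ∑' z, Q z y) :
    ∃ w : {l : List V // IsSACycle E l} → ℝ,
      (∀ c, 0 ≤ w c) ∧
      ∀ y z, E y z →
        HasSum
          (fun c : {l : List V // IsSACycle E l} =>
            if (y, z) ∈ (c : List V).zip ((c : List V).rotate 1) then w c else 0)
          (Q y z) :=
  stmt7_general E Q hnonneg hzero hsum hdiv
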